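/- arXiv:1411.6296 — 2 statements merged into one kernel-verified Lean document; each statement's English description precedes it below -/
import Mathlib

section
/- Every PS-symmetric matrix A ∈ ℝ^{n²×n²} has a structured spectral decomposition: there exists an orthonormal basis v₁,…,v_{n²} of ℝ^{n²} consisting of eigenvectors of A such that each basis vector v_k satisfies either Π v_k = v_k or Π v_k = −v_k; moreover exactly n(n+1)/2 of them satisfy Π v_k = v_k and exactly n(n−1)/2 satisfy Π v_k = −v_k. -/
/-!
The condition `A = Π A Π` says that `A` commutes with the symmetric involution `Π`. Two
commuting symmetric operators have a common orthonormal eigenbasis, and since `Π² = 1` every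
vector of it is fixed or negated by `Π`. Counting these two kinds through the trace,
`#fixed + #negated = n²` and `#fixed - #negated = tr Π = n`, the number of diagonal positions.
-/

open Matrix

/-- The perfect shuffle permutation matrix `Π_{n,n}` on `ℝ^{n²}`, where the index
`i+(j-1)n` of `ℝ^{n²}` is encoded as the pair `(i,j) : Fin n × Fin n`.  It is
determined by `Π e_{(i,j)} = e_{(j,i)}`, i.e. `Π e_{i+(j−1)n} = e_{j+(i−1)n}`. -/
def perfectShuffle (n : ℕ) : Matrix (Fin n × Fin n) (Fin n × Fin n) ℝ :=
  Matrix.of fun p q => if p.1 = q.2 ∧ p.2 = q.1 then 1 else 0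

open Module InnerProductSpace

theorem perfectShuffle_eq_permMatrix (n : ℕ) :
    perfectShuffle n = Equiv.Perm.permMatrix ℝ (Equiv.prodComm (Fin n) (Fin n)) := by
  ext p q
  simp [perfectShuffle, Prod.ext_iff, eq_comm, and_comm]

theorem isHermitian_perfectShuffle (n : ℕ) : (perfectShuffle n).IsHermitian := by
  rw [isHermitian_iff_isSymm, IsSymm, perfectShuffle_eq_permMatrix, transpose_permMatrix]
  rfl

theorem perfectShuffle_mul_self (n : ℕ) : perfectShuffle n * perfectShuffle n = 1 := by
  rw [perfectShuffle_eq_permMatrix, ← permMatrix_mul,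
    show Equiv.prodComm (Fin n) (Fin n) * Equiv.prodComm _ _ = 1 from Equiv.ext fun _ => rfl,
    permMatrix_one]

theorem trace_perfectShuffle (n : ℕ) : (perfectShuffle n).trace = n := by
  simp only [Matrix.trace, diag, perfectShuffle, of_apply, Fintype.sum_prod_type]
  simp [eq_comm]

theorem toEuclideanLin_perfectShuffle_mul_self (n : ℕ) :
    toEuclideanLin (perfectShuffle n) * toEuclideanLin (perfectShuffle n) = 1 := by
  change toLpLinAlgEquiv 2 _ * toLpLinAlgEquiv 2 _ = 1
  rw [← map_mul, perfectShuffle_mul_self, map_one]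

theorem Matrix.trace_toEuclideanLin {𝕜 ι : Type*} [RCLike 𝕜] [Fintype ι] [DecidableEq ι]
    (M : Matrix ι ι 𝕜) : LinearMap.trace 𝕜 _ (toEuclideanLin M) = M.trace :=
  M.trace_toLin_eq (PiLp.basisFun 2 𝕜 ι)

theorem commute_of_eq_mul_mul_of_mul_self_eq_one {M : Type*} [Monoid M] {p a : M}
    (hp : p * p = 1) (h : a = p * a * p) : Commute p a :=
  calc p * a = p * (p * a * p) := by rw [← h]
    _ = a * p := by simp only [← mul_assoc, hp, one_mul]

theorem Module.End.apply_eq_or_eq_neg_of_mul_self_eq_one {K M : Type*} [Field K]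
    [AddCommGroup M] [Module K M] {f : Module.End K M} (hf : f * f = 1) {x : M} (hx : x ≠ 0)
    {ν : K} (h : f x = ν • x) : f x = x ∨ f x = -x := by
  have hν : ν * ν = 1 := by
    refine smul_left_injective K hx ?_
    simp only [mul_smul, ← h, ← map_smul, one_smul, ← Module.End.mul_apply, hf,
      Module.End.one_apply]
  rcases mul_self_eq_one_iff.mp hν with rfl | rfl
  · exact .inl (by simpa using h)
  · exact .inr (by simpa using h)

section CommonEigenbasis

variable {𝕜 E ι : Type*} [RCLike 𝕜] [NormedAddCommGroup E] [InnerProductSpace 𝕜 E]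
  [FiniteDimensional 𝕜 E] [Fintype ι]

/- Diagonalize `B` on each eigenspace of `A`, which `B` preserves, and collect these
eigenbases along the orthogonal decomposition of `E` into eigenspaces of `A`. -/
theorem LinearMap.IsSymmetric.exists_orthonormalBasis_eigenvectors_of_commute
    (hι : Fintype.card ι = finrank 𝕜 E) {A B : E →ₗ[𝕜] E}
    (hA : A.IsSymmetric) (hB : B.IsSymmetric) (hAB : Commute A B) :
    ∃ b : OrthonormalBasis ι 𝕜 E,
      ∀ i, (∃ μ : 𝕜, A (b i) = μ • b i) ∧ ∃ ν : 𝕜, B (b i) = ν • b i := by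
  classical
  have hBA (μ : 𝕜) : Set.MapsTo B (End.eigenspace A μ) (End.eigenspace A μ) :=
    End.mapsTo_genEigenspace_of_comm hAB μ 1
  have hBμ (μ : End.Eigenvalues A) := hB.restrict_invariant (hBA μ)
  let c (μ : End.Eigenvalues A) := (hBμ μ).eigenvectorBasis rfl
  let b := hA.direct_sum_isInternal.collectedOrthonormalBasis hA.orthogonalFamily_eigenspaces' c
  have hcard : Fintype.card ι =
      Fintype.card (Σ μ : End.Eigenvalues A, Fin (finrank 𝕜 (End.eigenspace A μ))) := by
    rw [hι, finrank_eq_card_basis b.toBasis]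
  refine ⟨b.reindex (Fintype.equivOfCardEq hcard).symm, fun i => ?_⟩
  simp only [OrthonormalBasis.reindex_apply, Equiv.symm_symm]
  set a := Fintype.equivOfCardEq hcard i
  have hbA : b a ∈ End.eigenspace A a.1 :=
    hA.direct_sum_isInternal.collectedOrthonormalBasis_mem hA.orthogonalFamily_eigenspaces' c a
  have hbc : b a = c a.1 a.2 := by
    simp [b, DirectSum.IsInternal.collectedOrthonormalBasis,
      DirectSum.IsInternal.collectedBasis_coe]
  refine ⟨⟨_, End.mem_eigenspace_iff.mp hbA⟩, ⟨(hBμ a.1).eigenvalues rfl a.2, ?_⟩⟩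
  rw [hbc]
  exact congrArg Subtype.val ((hBμ a.1).apply_eigenvectorBasis rfl a.2)

end CommonEigenbasis

namespace OrthonormalBasis

section SignedBasis

variable {E ι : Type*} [NormedAddCommGroup E] [InnerProductSpace ℝ E] [Fintype ι]
  {B : E →ₗ[ℝ] E} (b : OrthonormalBasis ι ℝ E)
  (hB : ∀ i, B (b i) = b i ∨ B (b i) = -b i)
include hB

theorem apply_eq_neg_iff_ne (i : ι) : B (b i) = -b i ↔ B (b i) ≠ b i := by
  refine ⟨fun h h' => b.orthonormal.ne_zero i ?_, fun h => (hB i).resolve_left h⟩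
  have h2 : (2 : ℝ) • b i = 0 := by
    rw [two_smul]
    nth_rewrite 1 [← h', h]
    exact neg_add_cancel _
  exact (smul_eq_zero.mp h2).resolve_left two_ne_zero

theorem card_add_card_of_apply_eq_or_eq_neg :
    Nat.card {i // B (b i) = b i} + Nat.card {i // B (b i) = -b i} = Fintype.card ι := by
  classical
  simp only [b.apply_eq_neg_iff_ne hB, Nat.card_eq_fintype_card, Fintype.card_subtype_compl]
  exact Nat.add_sub_of_le (Fintype.card_subtype_le _)

theorem trace_eq_card_sub_card_of_apply_eq_or_eq_neg :
    LinearMap.trace ℝ E B = Nat.card {i // B (b i) = b i} - Nat.card {i // B (b i) = -b i} := by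
  classical
  have hterm (i : ι) : ⟪b i, B (b i)⟫_ℝ = if B (b i) = b i then 1 else -1 := by
    rcases hB i with h | h
    · rw [if_pos h, h, real_inner_self_eq_norm_sq, b.norm_eq_one, one_pow]
    · rw [if_neg ((b.apply_eq_neg_iff_ne hB i).mp h), h, inner_neg_right,
        real_inner_self_eq_norm_sq, b.norm_eq_one, one_pow]
  simp only [LinearMap.trace_eq_sum_inner B b, hterm, Finset.sum_ite, Finset.sum_const,
    b.apply_eq_neg_iff_ne hB, Nat.card_eq_fintype_card, Fintype.card_subtype]
  simp [sub_eq_add_neg]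

end SignedBasis

variable {ι κ : Type*} [Fintype ι] [Fintype κ]

theorem ofLp_dotProduct_ofLp [DecidableEq κ] (b : OrthonormalBasis κ ℝ (EuclideanSpace ℝ ι))
    (k l : κ) : (b k).ofLp ⬝ᵥ (b l).ofLp = if k = l then 1 else 0 := by
  rw [dotProduct_comm, ← star_trivial (b k).ofLp, ← EuclideanSpace.inner_eq_star_dotProduct]
  exact orthonormal_iff_ite.mp b.orthonormal k l

theorem span_range_ofLp {𝕜 : Type*} [RCLike 𝕜]
    (b : OrthonormalBasis κ 𝕜 (EuclideanSpace 𝕜 ι)) :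
    Submodule.span 𝕜 (Set.range fun k => (b k).ofLp) = ⊤ :=
  (b.toBasis.map (WithLp.linearEquiv 2 𝕜 (ι → 𝕜))).span_eq

end OrthonormalBasis

theorem eq_mul_succ_div_two_of_add_eq_mul_self_of_sub_eq {n p m : ℕ} (hsum : p + m = n * n)
    (hdiff : (p : ℝ) - m = n) : p = n * (n + 1) / 2 ∧ m = n * (n - 1) / 2 := by
  have hp : p = m + n := by exact_mod_cast (by linarith : (p : ℝ) = m + n)
  rw [Nat.mul_succ, Nat.mul_sub_one]
  omega

theorem psSymmetric_structured_spectral_decomposition_general (n : ℕ)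
    (A : Matrix (Fin n × Fin n) (Fin n × Fin n) ℝ)
    (hsym : A = Aᵀ) (hps : A = perfectShuffle n * A * perfectShuffle n) :
    ∃ v : (Fin n × Fin n) → (Fin n × Fin n → ℝ),
      (∀ k l, v k ⬝ᵥ v l = if k = l then 1 else 0) ∧
      Submodule.span ℝ (Set.range v) = ⊤ ∧
      (∀ k, ∃ μ : ℝ, A *ᵥ v k = μ • v k) ∧
      (∀ k, perfectShuffle n *ᵥ v k = v k ∨ perfectShuffle n *ᵥ v k = -(v k)) ∧
      Nat.card {k : Fin n × Fin n // perfectShuffle n *ᵥ v k = v k} =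
        n * (n + 1) / 2 ∧
      Nat.card {k : Fin n × Fin n // perfectShuffle n *ᵥ v k = -(v k)} =
        n * (n - 1) / 2 := by
  set P := toEuclideanLin (perfectShuffle n)
  have hA := isSymmetric_toEuclideanLin_iff.mpr (isHermitian_iff_isSymm.mpr hsym.symm)
  have hP := isSymmetric_toEuclideanLin_iff.mpr (isHermitian_perfectShuffle n)
  have hAP : Commute (toEuclideanLin A) P :=
    ((commute_of_eq_mul_mul_of_mul_self_eq_one (perfectShuffle_mul_self n) hps).symm).map
      (toLpLinAlgEquiv 2)
  obtain ⟨b, hb⟩ :=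
    hA.exists_orthonormalBasis_eigenvectors_of_commute finrank_euclideanSpace.symm hP hAP
  have hbP (k) : P (b k) = b k ∨ P (b k) = -b k :=
    End.apply_eq_or_eq_neg_of_mul_self_eq_one (toEuclideanLin_perfectShuffle_mul_self n)
      (b.orthonormal.ne_zero k) (hb k).2.choose_spec
  have hPofLp {x y : EuclideanSpace ℝ (Fin n × Fin n)} :
      perfectShuffle n *ᵥ x.ofLp = y.ofLp ↔ P x = y :=
    (WithLp.ofLp_injective 2).eq_iff (a := P x)
  obtain ⟨hplus, hminus⟩ := eq_mul_succ_div_two_of_add_eq_mul_self_of_sub_eq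
    ((b.card_add_card_of_apply_eq_or_eq_neg hbP).trans
      (by rw [Fintype.card_prod, Fintype.card_fin]))
    (by rw [← b.trace_eq_card_sub_card_of_apply_eq_or_eq_neg hbP,
      trace_toEuclideanLin, trace_perfectShuffle])
  refine ⟨fun k => (b k).ofLp, b.ofLp_dotProduct_ofLp, b.span_range_ofLp,
    fun k => ?_, fun k => ?_, ?_, ?_⟩
  · obtain ⟨μ, hμ⟩ := (hb k).1
    exact ⟨μ, congrArg WithLp.ofLp hμ⟩
  · simpa only [← WithLp.ofLp_neg, hPofLp] using hbP k
  · simpa only [hPofLp] using hplus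
  · simpa only [← WithLp.ofLp_neg, hPofLp] using hminus

/-- every PS-symmetric `A` has a structured spectral decomposition:
an orthonormal basis `v_k` of `ℝ^{n²}` of eigenvectors of `A` such that each
`v_k` satisfies `Π v_k = v_k` or `Π v_k = −v_k`, with exactly `n(n+1)/2` of the
former and exactly `n(n−1)/2` of the latter. -/
theorem psSymmetric_structured_spectral_decomposition (n : ℕ) (hn : 0 < n)
    (A : Matrix (Fin n × Fin n) (Fin n × Fin n) ℝ)
    (hsym : A = Aᵀ) (hps : A = perfectShuffle n * A * perfectShuffle n) :
    ∃ v : (Fin n × Fin n) → (Fin n × Fin n → ℝ),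
      (∀ k l, v k ⬝ᵥ v l = if k = l then 1 else 0) ∧
      Submodule.span ℝ (Set.range v) = ⊤ ∧
      (∀ k, ∃ μ : ℝ, A *ᵥ v k = μ • v k) ∧
      (∀ k, perfectShuffle n *ᵥ v k = v k ∨ perfectShuffle n *ᵥ v k = -(v k)) ∧
      Nat.card {k : Fin n × Fin n // perfectShuffle n *ᵥ v k = v k} =
        n * (n + 1) / 2 ∧
      Nat.card {k : Fin n × Fin n // perfectShuffle n *ᵥ v k = -(v k)} =
        n * (n - 1) / 2 :=
  psSymmetric_structured_spectral_decomposition_general n A hsym hps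
end

section
/- If A ∈ ℝ^{n²×n²} is PS-symmetric, then A admits a structured Kronecker-product expansion: there exist real scalars λ₁,…,λ_{n(n+1)/2} and μ₁,…,μ_{n(n−1)/2}, symmetric matrices B₁,…,B_{n(n+1)/2} ∈ ℝ^{n×n}, and skew-symmetric matrices C₁,…,C_{n(n−1)/2} ∈ ℝ^{n×n} such that A = Σᵢ λᵢ (Bᵢ ⊗ Bᵢ) + Σᵢ μᵢ (Cᵢ ⊗ Cᵢ), where ⊗ denotes the Kronecker product of matrices. -/
/-!
Realigning `A` along `((i₁, i₂), (j₁, j₂)) ↦ ((i₁, j₁), (i₂, j₂))` (the rearrangement of Van Loan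
and Pitsianis) turns `B ⊗ₖ B` into the rank-one matrix `vec B (vec B)ᵀ`. PS-symmetry of `A` makes
the realigned matrix `M` symmetric, and symmetry of `A` makes `M` commute with `vec X ↦ vec Xᵀ`,
so `M` preserves the orthogonal complementary subspaces of symmetric and of skew-symmetric
vectors, of dimensions `n(n+1)/2` and `n(n-1)/2`. The spectral theorem on each of them expands
`M` in reshaped eigenvectors, and realigning back gives the expansion of `A`.
-/

open Matrix Kronecker

open Module
open scoped RealInnerProductSpace

section Spectral

variable {E : Type*} [NormedAddCommGroup E] [InnerProductSpace ℝ E] [FiniteDimensional ℝ E]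
  {T : E →ₗ[ℝ] E}

theorem LinearMap.IsSymmetric.inner_apply_eq_sum_eigenvalues (hT : T.IsSymmetric) {k : ℕ}
    (hk : finrank ℝ E = k) (x y : E) :
    ⟪x, T y⟫ = ∑ i, hT.eigenvalues hk i *
      (⟪hT.eigenvectorBasis hk i, x⟫ * ⟪hT.eigenvectorBasis hk i, y⟫) := by
  rw [← (hT.eigenvectorBasis hk).sum_inner_mul_inner x (T y)]
  refine Finset.sum_congr rfl fun i _ => ?_
  rw [← hT, hT.apply_eigenvectorBasis, real_inner_smul_left, real_inner_comm x,
    RCLike.ofReal_real_eq_id, id_eq]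
  ring

theorem LinearMap.IsSymmetric.exists_inner_apply_eq_sum_of_invariant (hT : T.IsSymmetric)
    {V : Submodule ℝ E} (hV : ∀ x ∈ V, T x ∈ V) {k : ℕ} (hk : finrank ℝ V = k) :
    ∃ (lam : Fin k → ℝ) (b : Fin k → E), (∀ i, b i ∈ V) ∧
      ∀ x ∈ V, ∀ y ∈ V, ⟪x, T y⟫ = ∑ i, lam i * (⟪b i, x⟫ * ⟪b i, y⟫) :=
  let hTV := hT.restrict_invariant hV
  ⟨hTV.eigenvalues hk, fun i => hTV.eigenvectorBasis hk i, fun i => (hTV.eigenvectorBasis hk i).2,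
    fun x hx y hy => hTV.inner_apply_eq_sum_eigenvalues hk ⟨x, hx⟩ ⟨y, hy⟩⟩

theorem LinearMap.IsSymmetric.exists_inner_apply_eq_sum_of_isCompl (hT : T.IsSymmetric)
    {V W : Submodule ℝ E} (hVW : IsCompl V W) (hortho : V ⟂ W)
    (hV : ∀ x ∈ V, T x ∈ V) (hW : ∀ x ∈ W, T x ∈ W) {k m : ℕ}
    (hk : finrank ℝ V = k) (hm : finrank ℝ W = m) :
    ∃ (lam : Fin k → ℝ) (mu : Fin m → ℝ) (b : Fin k → E) (c : Fin m → E),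
      (∀ i, b i ∈ V) ∧ (∀ j, c j ∈ W) ∧ ∀ x y : E, ⟪x, T y⟫ =
        ∑ i, lam i * (⟪b i, x⟫ * ⟪b i, y⟫) + ∑ j, mu j * (⟪c j, x⟫ * ⟪c j, y⟫) := by
  obtain ⟨lam, b, hbV, hTV⟩ := hT.exists_inner_apply_eq_sum_of_invariant hV hk
  obtain ⟨mu, c, hcW, hTW⟩ := hT.exists_inner_apply_eq_sum_of_invariant hW hm
  refine ⟨lam, mu, b, c, hbV, hcW, fun x y => ?_⟩
  have hsplit (z : E) : ∃ v ∈ V, ∃ w ∈ W, v + w = z :=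
    Submodule.mem_sup.1 (hVW.sup_eq_top ▸ Submodule.mem_top)
  obtain ⟨xv, hxv, xw, hxw, rfl⟩ := hsplit x
  obtain ⟨yv, hyv, yw, hyw, rfl⟩ := hsplit y
  simp only [map_add, inner_add_left, inner_add_right, hortho.inner_eq hxv (hW yw hyw),
    hortho.symm.inner_eq hxw (hV yv hyv), fun i => hortho.inner_eq (hbV i) hxw,
    fun i => hortho.inner_eq (hbV i) hyw, fun j => hortho.symm.inner_eq (hcW j) hxv,
    fun j => hortho.symm.inner_eq (hcW j) hyv, hTV xv hxv yv hyv, hTW xw hxw yw hyw,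
    add_zero, zero_add]

end Spectral

section SymmetricVectors

variable (α : Type*)

def symmetricVectors : Submodule ℝ (EuclideanSpace ℝ (α × α)) where
  carrier := {x | ∀ p, x p.swap = x p}
  add_mem' hx hy p := by simp [hx p, hy p]
  zero_mem' _ := rfl
  smul_mem' c x hx p := by simp [hx p]

def skewVectors : Submodule ℝ (EuclideanSpace ℝ (α × α)) where
  carrier := {x | ∀ p, x p.swap = -x p}
  add_mem' hx hy p := by simp [hx p, hy p]; ring
  zero_mem' _ := by simp
  smul_mem' c x hx p := by simp [hx p]

variable {α} [Fintype α]

theorem symmetricVectors_isOrtho_skewVectors : symmetricVectors α ⟂ skewVectors α := by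
  refine Submodule.isOrtho_iff_inner_eq.2 fun x hx y hy => ?_
  have hswap : ⟪x, y⟫ = -⟪x, y⟫ := by
    simp only [PiLp.inner_apply, RCLike.inner_apply, conj_trivial]
    calc ∑ p : α × α, y p * x p = ∑ p : α × α, y p.swap * x p.swap :=
          ((Equiv.prodComm α α).sum_comp _).symm
      _ = -∑ p, y p * x p := by simp [hx _, hy _]
  linarith

theorem isCompl_symmetricVectors_skewVectors : IsCompl (symmetricVectors α) (skewVectors α) := by
  refine ⟨symmetricVectors_isOrtho_skewVectors.disjoint,
    codisjoint_iff.2 (eq_top_iff.2 fun x _ => ?_)⟩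
  refine Submodule.mem_sup.2 ⟨WithLp.toLp 2 fun p => (x p + x p.swap) / 2, fun p => ?_,
    WithLp.toLp 2 fun p => (x p - x p.swap) / 2, fun p => ?_, ?_⟩
  · simp [add_comm]
  · simp; ring
  · ext p; simp; ring

def symmetricVectorsEquiv : (Sym2 α → ℝ) ≃ₗ[ℝ] symmetricVectors α where
  toFun f := ⟨WithLp.toLp 2 fun p => f s(p.1, p.2), fun p => by simp [Sym2.eq_swap]⟩
  invFun x := Sym2.lift ⟨fun i j => x.1 (i, j), fun i j => x.2 (j, i)⟩
  map_add' _ _ := rfl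
  map_smul' _ _ := rfl
  left_inv f := funext fun s => s.ind fun _ _ => rfl
  right_inv _ := rfl

theorem finrank_symmetricVectors :
    finrank ℝ (symmetricVectors α) = Fintype.card α * (Fintype.card α + 1) / 2 := by
  classical
  rw [← (symmetricVectorsEquiv (α := α)).finrank_eq, finrank_fintype_fun_eq_card, Sym2.card,
    Nat.choose_two_right, Nat.add_sub_cancel, mul_comm]

theorem finrank_skewVectors :
    finrank ℝ (skewVectors α) = Fintype.card α * (Fintype.card α - 1) / 2 := by
  have h := Submodule.finrank_add_eq_of_isCompl (isCompl_symmetricVectors_skewVectors (α := α))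
  rw [finrank_symmetricVectors, finrank_euclideanSpace, Fintype.card_prod] at h
  set n := Fintype.card α
  have h1 : n * (n + 1) / 2 = n * (n - 1) / 2 + n := by
    simpa [mul_comm] using Nat.triangle_succ n
  have h2 : n * (n - 1) / 2 * 2 = n * (n - 1) :=
    Nat.div_two_mul_two_of_even (Nat.even_mul_pred_self n)
  have h3 : n * (n - 1) + n = n * n := by
    cases n <;> simp [Nat.mul_succ]
  omega

end SymmetricVectors

section SwapInvariant

variable {α : Type*} [Fintype α] [DecidableEq α] {M : Matrix (α × α) (α × α) ℝ}

theorem toEuclideanLin_apply_swap (hM : ∀ p q, M p.swap q.swap = M p q)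
    (x : EuclideanSpace ℝ (α × α)) (p : α × α) :
    M.toEuclideanLin x p.swap = ∑ q, M p q * x q.swap := by
  simp only [toLpLin_apply, mulVec, dotProduct]
  rw [← (Equiv.prodComm α α).sum_comp]
  simp [hM]

theorem toEuclideanLin_mem_symmetricVectors (hM : ∀ p q, M p.swap q.swap = M p q)
    {x : EuclideanSpace ℝ (α × α)} (hx : x ∈ symmetricVectors α) :
    M.toEuclideanLin x ∈ symmetricVectors α := fun p => by
  simp [toEuclideanLin_apply_swap hM, hx _, mulVec, dotProduct]

theorem toEuclideanLin_mem_skewVectors (hM : ∀ p q, M p.swap q.swap = M p q)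
    {x : EuclideanSpace ℝ (α × α)} (hx : x ∈ skewVectors α) :
    M.toEuclideanLin x ∈ skewVectors α := fun p => by
  simp [toEuclideanLin_apply_swap hM, hx _, mulVec, dotProduct]

theorem Matrix.IsSymm.exists_eigen_expansion_of_swap_invariant (hMs : M.IsSymm)
    (hM : ∀ p q, M p.swap q.swap = M p q) :
    ∃ (lam : Fin (Fintype.card α * (Fintype.card α + 1) / 2) → ℝ)
      (mu : Fin (Fintype.card α * (Fintype.card α - 1) / 2) → ℝ)
      (b : Fin (Fintype.card α * (Fintype.card α + 1) / 2) → EuclideanSpace ℝ (α × α))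
      (c : Fin (Fintype.card α * (Fintype.card α - 1) / 2) → EuclideanSpace ℝ (α × α)),
      (∀ i, b i ∈ symmetricVectors α) ∧ (∀ j, c j ∈ skewVectors α) ∧ ∀ p q,
        M p q = ∑ i, lam i * (b i p * b i q) + ∑ j, mu j * (c j p * c j q) := by
  have hT : M.toEuclideanLin.IsSymmetric :=
    isSymmetric_toEuclideanLin_iff.2 (isHermitian_iff_isSymm.2 hMs)
  obtain ⟨lam, mu, b, c, hb, hc, hexp⟩ := hT.exists_inner_apply_eq_sum_of_isCompl
    isCompl_symmetricVectors_skewVectors symmetricVectors_isOrtho_skewVectors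
    (fun _ => toEuclideanLin_mem_symmetricVectors hM) (fun _ => toEuclideanLin_mem_skewVectors hM)
    finrank_symmetricVectors finrank_skewVectors
  refine ⟨lam, mu, b, c, hb, hc, fun p q => ?_⟩
  simpa [EuclideanSpace.inner_single_left, EuclideanSpace.inner_single_right, mulVec_single_one]
    using hexp (EuclideanSpace.single p 1) (EuclideanSpace.single q 1)

end SwapInvariant

theorem perfectShuffle_eq_toMatrix (n : ℕ) :
    perfectShuffle n = (Equiv.prodComm (Fin n) (Fin n)).toPEquiv.toMatrix := by
  ext p q
  simp [perfectShuffle, PEquiv.toMatrix_apply, Prod.ext_iff, eq_comm, and_comm]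

theorem perfectShuffle_mul_mul_perfectShuffle {n : ℕ}
    (A : Matrix (Fin n × Fin n) (Fin n × Fin n) ℝ) :
    perfectShuffle n * A * perfectShuffle n = A.submatrix Prod.swap Prod.swap := by
  rw [perfectShuffle_eq_toMatrix, PEquiv.toMatrix_toPEquiv_mul, PEquiv.mul_toMatrix_toPEquiv]
  rfl

def realign {α : Type*} (A : Matrix (α × α) (α × α) ℝ) : Matrix (α × α) (α × α) ℝ :=
  of fun p q => A (p.1, q.1) (p.2, q.2)

theorem realign_isSymm {α : Type*} {A : Matrix (α × α) (α × α) ℝ}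
    (hA : A = A.submatrix Prod.swap Prod.swap) : (realign A).IsSymm := by
  ext p q
  exact (congrFun₂ hA (p.1, q.1) (p.2, q.2)).symm

theorem realign_apply_swap {α : Type*} {A : Matrix (α × α) (α × α) ℝ} (hA : A = Aᵀ)
    (p q : α × α) : realign A p.swap q.swap = realign A p q :=
  (congrFun₂ hA (p.1, q.1) (p.2, q.2)).symm

/-- The paper's convention `(M ⊗ N)(i+(p−1)n, j+(q−1)n) = M(p,q)·N(i,j)` agrees entrywise with
`⊗ₖ` here, since both Kronecker factors coincide, under the encoding `(i,p)` of `i+(p−1)n`. -/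
theorem psSymmetric_kronecker_expansion_general (n : ℕ)
    (A : Matrix (Fin n × Fin n) (Fin n × Fin n) ℝ)
    (hsym : A = Aᵀ) (hps : A = perfectShuffle n * A * perfectShuffle n) :
    ∃ (lam : Fin (n * (n + 1) / 2) → ℝ) (mu : Fin (n * (n - 1) / 2) → ℝ)
      (B : Fin (n * (n + 1) / 2) → Matrix (Fin n) (Fin n) ℝ)
      (C : Fin (n * (n - 1) / 2) → Matrix (Fin n) (Fin n) ℝ),
      (∀ i, (B i)ᵀ = B i) ∧ (∀ i, (C i)ᵀ = -(C i)) ∧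
      A = (∑ i, lam i • (B i ⊗ₖ B i)) + ∑ i, mu i • (C i ⊗ₖ C i) := by
  rw [perfectShuffle_mul_mul_perfectShuffle] at hps
  have hexists :=
    (realign_isSymm hps).exists_eigen_expansion_of_swap_invariant (realign_apply_swap hsym)
  rw [Fintype.card_fin] at hexists
  obtain ⟨lam, mu, b, c, hb, hc, hexp⟩ := hexists
  refine ⟨lam, mu, fun i => of fun k l => b i (k, l), fun j => of fun k l => c j (k, l),
    fun i => ?_, fun j => ?_, ?_⟩
  · ext k l; exact hb i (k, l)
  · ext k l; exact hc j (k, l)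
  · ext ⟨i₁, i₂⟩ ⟨j₁, j₂⟩
    simpa [Matrix.sum_apply, realign] using hexp (i₁, j₁) (i₂, j₂)

/-- a PS-symmetric `A` admits a structured Kronecker-product
expansion `A = Σ λᵢ (Bᵢ ⊗ Bᵢ) + Σ μᵢ (Cᵢ ⊗ Cᵢ)` with `n(n+1)/2` symmetric
matrices `Bᵢ` and `n(n−1)/2` skew-symmetric matrices `Cᵢ`.
(Since both Kronecker factors coincide, the paper's convention
`(M ⊗ N)(i+(p−1)n, j+(q−1)n) = M(p,q)·N(i,j)` agrees entrywise with `⊗ₖ`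
under the pair encoding `(i,p)` of `i+(p−1)n`.) -/
theorem psSymmetric_kronecker_expansion (n : ℕ) (hn : 0 < n)
    (A : Matrix (Fin n × Fin n) (Fin n × Fin n) ℝ)
    (hsym : A = Aᵀ) (hps : A = perfectShuffle n * A * perfectShuffle n) :
    ∃ (lam : Fin (n * (n + 1) / 2) → ℝ) (mu : Fin (n * (n - 1) / 2) → ℝ)
      (B : Fin (n * (n + 1) / 2) → Matrix (Fin n) (Fin n) ℝ)
      (C : Fin (n * (n - 1) / 2) → Matrix (Fin n) (Fin n) ℝ),
      (∀ i, (B i)ᵀ = B i) ∧ (∀ i, (C i)ᵀ = -(C i)) ∧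
      A = (∑ i, lam i • (B i ⊗ₖ B i)) + ∑ i, mu i • (C i ⊗ₖ C i) :=
  psSymmetric_kronecker_expansion_general n A hsym hps
end
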